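/- arXiv:2307.15661 — 4 statements merged into one kernel-verified Lean document; each statement's English description precedes it below -/
import Mathlib

section
/- For n a positive integer, the sum over k from 0 to ⌊n/2⌋ of (((n - 2k + 1)/(n - k + 1)) * binomial(n, k))² equals the n-th Catalan number (1/(n+1)) * binomial(2n, n). -/
open Finset

private lemma sum_choose_sq (n : ℕ) :
    ∑ k ∈ range (n + 1), (n.choose k) ^ 2 = (2 * n).choose n := by
  rw [two_mul, Nat.add_choose_eq, Finset.Nat.sum_antidiagonal_eq_sum_range_succ_mk]
  refine Finset.sum_congr rfl fun k hk => ?_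
  have hk' : k ≤ n := Nat.lt_succ_iff.mp (mem_range.mp hk)
  rw [Nat.choose_symm hk', sq]

private lemma sum_choose_adj (n : ℕ) (hn : 0 < n) :
    ∑ k ∈ range n, n.choose k * n.choose (k + 1) = (2 * n).choose (n - 1) := by
  rw [two_mul, Nat.add_choose_eq, Finset.Nat.sum_antidiagonal_eq_sum_range_succ_mk,
    show (n - 1).succ = n by omega]
  refine Finset.sum_congr rfl fun k hk => ?_
  have hk' : k < n := mem_range.mp hk
  rw [show n - 1 - k = n - (k + 1) by omega, Nat.choose_symm (by omega)]

private def dd (n k : ℕ) : ℚ :=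
  (n.choose k : ℚ) - (if k = 0 then 0 else (n.choose (k - 1) : ℚ))

private lemma dd_zero (n : ℕ) : dd n 0 = 1 := by simp [dd]

private lemma dd_succ (n k : ℕ) :
    dd n (k + 1) = (n.choose (k + 1) : ℚ) - (n.choose k : ℚ) := by
  simp [dd]

private lemma dd_reflect (n : ℕ) (k : ℕ) (hk : k ≤ n + 1) :
    dd n (n + 1 - k) = -dd n k := by
  rcases k with _ | j
  · rw [dd_zero, Nat.sub_zero, dd_succ, Nat.choose_succ_self, Nat.choose_self]
    norm_num
  · have hj : j ≤ n := by omega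
    rcases Nat.eq_or_lt_of_le hj with rfl | hlt
    · rw [show j + 1 - (j + 1) = 0 from Nat.sub_self _, dd_zero, dd_succ,
        Nat.choose_succ_self, Nat.choose_self]
      norm_num
    · rw [show n + 1 - (j + 1) = (n - j - 1) + 1 by omega, dd_succ, dd_succ,
        show n - j - 1 + 1 = n - j by omega,
        Nat.choose_symm hj,
        show n - j - 1 = n - (j + 1) by omega, Nat.choose_symm (by omega)]
      ring

/-- The sum over `k = 0, …, ⌊n/2⌋` of the squares of the dimensions
`((n - 2k + 1)/(n - k + 1)) * choose n k` of the two-row irreps `[n-k,k]` of `S_n`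
equals the `n`-th Catalan number `(1/(n+1)) * choose (2n) n`. -/
theorem sum_sq_twoRowIrrepDim_eq_catalan (n : ℕ) (hn : 0 < n) :
    ∑ k ∈ Finset.range (n / 2 + 1),
        ((((n : ℚ) - 2 * k + 1) / ((n : ℚ) - k + 1)) * (n.choose k : ℚ)) ^ 2 =
      (1 / ((n : ℚ) + 1)) * ((2 * n).choose n : ℚ) := by
  -- Step 1: the summand equals `dd n k ^ 2`.
  have hstep : ∀ k ∈ range (n / 2 + 1),
      ((((n : ℚ) - 2 * k + 1) / ((n : ℚ) - k + 1)) * (n.choose k : ℚ)) ^ 2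
        = dd n k ^ 2 := by
    intro k hk
    rcases k with _ | j
    · have h1 : (n : ℚ) + 1 ≠ 0 := by positivity
      rw [dd_zero]
      rw [Nat.choose_zero_right]
      push_cast
      rw [mul_zero, sub_zero, div_self h1]
      norm_num
    · have hj1 : j + 1 ≤ n / 2 := Nat.lt_succ_iff.mp (mem_range.mp hk)
      have hjn : j < n := by omega
      have hD : (n : ℚ) - j ≠ 0 := sub_ne_zero.mpr (by exact_mod_cast hjn.ne')
      have hcQ : (n.choose (j + 1) : ℚ) * (j + 1) = (n.choose j : ℚ) * ((n : ℚ) - j) := by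
        have h := Nat.choose_succ_right_eq n j
        have h2 := congrArg (fun m : ℕ => (m : ℚ)) h
        push_cast [Nat.cast_sub hjn.le] at h2
        linear_combination h2
      rw [dd_succ]
      congr 1
      have hD' : (n : ℚ) - ((j + 1 : ℕ) : ℚ) + 1 ≠ 0 := by
        push_cast
        intro h
        exact hD (by linarith)
      rw [div_mul_eq_mul_div, div_eq_iff hD']
      push_cast
      linear_combination (-1 : ℚ) * hcQ
  rw [Finset.sum_congr rfl hstep]
  -- Step 2: full-range sum.
  have e1 : ∑ k ∈ range (n + 1), (n.choose k : ℚ) ^ 2 = ((2 * n).choose n : ℚ) := by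
    exact_mod_cast congrArg (fun m : ℕ => (m : ℚ)) (sum_choose_sq n)
  have e2 : ∑ k ∈ range n, (n.choose k : ℚ) * (n.choose (k + 1) : ℚ)
      = ((2 * n).choose (n - 1) : ℚ) := by
    exact_mod_cast congrArg (fun m : ℕ => (m : ℚ)) (sum_choose_adj n hn)
  have hfull : ∑ k ∈ range (n + 2), dd n k ^ 2
      = 2 * ((2 * n).choose n : ℚ) - 2 * ((2 * n).choose (n - 1) : ℚ) := by
    rw [Finset.sum_range_succ' (fun k => dd n k ^ 2) (n + 1)]
    simp only [dd_zero, dd_succ]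
    have expand : ∑ j ∈ range (n + 1), ((n.choose (j + 1) : ℚ) - (n.choose j : ℚ)) ^ 2
        = ∑ j ∈ range (n + 1), (n.choose (j + 1) : ℚ) ^ 2
          - 2 * ∑ j ∈ range (n + 1), (n.choose j : ℚ) * (n.choose (j + 1) : ℚ)
          + ∑ j ∈ range (n + 1), (n.choose j : ℚ) ^ 2 := by
      rw [Finset.mul_sum, ← Finset.sum_sub_distrib, ← Finset.sum_add_distrib]
      exact Finset.sum_congr rfl fun j _ => by ring
    rw [expand]
    have s1 : ∑ j ∈ range (n + 1), (n.choose (j + 1) : ℚ) ^ 2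
        = ((2 * n).choose n : ℚ) - 1 := by
      have := Finset.sum_range_succ' (fun k => (n.choose k : ℚ) ^ 2) (n + 1)
      rw [Finset.sum_range_succ (fun k => (n.choose k : ℚ) ^ 2) (n + 1)] at this
      simp [Nat.choose_succ_self] at this
      rw [e1] at this
      linarith [this]
    have s2 : ∑ j ∈ range (n + 1), (n.choose j : ℚ) * (n.choose (j + 1) : ℚ)
        = ((2 * n).choose (n - 1) : ℚ) := by
      rw [Finset.sum_range_succ, Nat.choose_succ_self]
      simpa using e2
    rw [s1, s2, e1]
    ring
  -- Step 3: halving by reflection.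
  have hIco : ∑ k ∈ Finset.Ico (n / 2 + 1) (n + 2), dd n k ^ 2
      = ∑ k ∈ range (n - n / 2 + 1), dd n k ^ 2 := by
    rw [range_eq_Ico]
    refine Finset.sum_nbij' (fun k => n + 1 - k) (fun k => n + 1 - k) ?_ ?_ ?_ ?_ ?_
    · intro a ha; simp only [mem_Ico] at ha ⊢; omega
    · intro a ha; simp only [mem_Ico] at ha ⊢; omega
    · intro a ha; simp only [mem_Ico] at ha; show n + 1 - (n + 1 - a) = a; omega
    · intro a ha; simp only [mem_Ico] at ha; show n + 1 - (n + 1 - a) = a; omega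
    · intro a ha
      simp only [mem_Ico] at ha
      rw [dd_reflect n a (by omega)]
      ring
  have htail : ∑ k ∈ range (n - n / 2 + 1), dd n k ^ 2
      = ∑ k ∈ range (n / 2 + 1), dd n k ^ 2 := by
    rcases Nat.even_or_odd n with he | ho
    · obtain ⟨m, rfl⟩ := he
      rw [show m + m - (m + m) / 2 = (m + m) / 2 by omega]
    · obtain ⟨m, rfl⟩ := ho
      rw [show 2 * m + 1 - (2 * m + 1) / 2 + 1 = ((2 * m + 1) / 2 + 1) + 1 by omega,
        Finset.sum_range_succ]
      have hz : dd (2 * m + 1) ((2 * m + 1) / 2 + 1) = 0 := by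
        rw [show (2 * m + 1) / 2 = m by omega, dd_succ]
        have : (2 * m + 1).choose (m + 1) = (2 * m + 1).choose m := by
          conv_lhs => rw [show m + 1 = 2 * m + 1 - m by omega]
          exact Nat.choose_symm (by omega)
        rw [this, sub_self]
      rw [hz]
      ring
  have hsplit : ∑ k ∈ range (n + 2), dd n k ^ 2
      = ∑ k ∈ range (n / 2 + 1), dd n k ^ 2 + ∑ k ∈ Finset.Ico (n / 2 + 1) (n + 2), dd n k ^ 2 := by
    rw [range_eq_Ico, ← Finset.sum_Ico_consecutive _ (Nat.zero_le _) (by omega : n / 2 + 1 ≤ n + 2),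
      ← range_eq_Ico]
  have hhalf : 2 * ∑ k ∈ range (n / 2 + 1), dd n k ^ 2
      = 2 * ((2 * n).choose n : ℚ) - 2 * ((2 * n).choose (n - 1) : ℚ) := by
    rw [← hfull, hsplit, hIco, htail]; ring
  -- Step 4: conclude with the Catalan relation.
  have hrel : ((2 * n).choose n : ℚ) * n = ((2 * n).choose (n - 1) : ℚ) * ((n : ℚ) + 1) := by
    have h := Nat.choose_succ_right_eq (2 * n) (n - 1)
    rw [show n - 1 + 1 = n by omega, show 2 * n - (n - 1) = n + 1 by omega] at h
    exact_mod_cast congrArg (fun m : ℕ => (m : ℚ)) h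
  have h1 : (n : ℚ) + 1 ≠ 0 := by positivity
  rw [div_mul_eq_mul_div, eq_div_iff h1, one_mul]
  linear_combination (((n : ℚ) + 1) / 2) * hhalf + hrel
end

section
/- For qubit swap matrices on n ≥ 4 qubits and four distinct indices i, j, k, ℓ, the commutation relation [S_{ij}, S_{kℓ}] = 0 is implied by the relations S_{pq}² = I, S_{pq}S_{qr} = S_{pr}S_{pq}, and the anticommutator relation S_{pq}S_{qr} + S_{qr}S_{pq} = S_{pq} + S_{qr} + S_{pr} − I; that is, the commutator lies in the two-sided ideal generated by these relations in the free algebra. -/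
/-- The free `*`-algebra generator `s_{ij}`, indexed by the unordered pair `{i,j}`
(so that `s_{ij} = s_{ji}` holds by construction). -/
noncomputable def sgen (n : ℕ) (i j : Fin n) : FreeAlgebra ℂ (Sym2 (Fin n)) :=
  FreeAlgebra.ι ℂ (Sym2.mk i j)

/-- The defining relations of the symbolic swap algebra, as elements of the free
algebra: for all distinct `i, j, k`,
(1) `s_{ij}² − 1`, (2) `s_{ij}s_{jk} − s_{ik}s_{ij}`, and
(3) `s_{ij}s_{jk} + s_{jk}s_{ij} − (s_{ij} + s_{jk} + s_{ik} − 1)`. -/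
def swapRelationSet (n : ℕ) : Set (FreeAlgebra ℂ (Sym2 (Fin n))) :=
  { p | ∃ i j k : Fin n, i ≠ j ∧ j ≠ k ∧ i ≠ k ∧
      (p = sgen n i j * sgen n i j - 1 ∨
       p = sgen n i j * sgen n j k - sgen n i k * sgen n i j ∨
       p = sgen n i j * sgen n j k + sgen n j k * sgen n i j -
            (sgen n i j + sgen n j k + sgen n i k - 1)) }

/-!
Relation (3) for the triple `(i, k, j)` expresses `s_{ij}` as
`s_{ik}s_{jk} + s_{jk}s_{ik} − s_{ik} − s_{jk} + 1`, and relation (3) for `(i, l, j)` gives the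
same expression in `s_{il}, s_{jl}`. By relation (2), left multiplication by `s_{kl}` carries
`s_{ik}, s_{jk}` past itself as `s_{il}, s_{jl}`, so it carries the first expression for `s_{ij}`
to the second one, i.e. `s_{kl} s_{ij} = s_{ij} s_{kl}` modulo the relations.
-/

theorem commute_of_semiconjBy_of_add_mul_eq {R : Type*} [Ring R] {a s x y u v : R}
    (hx : SemiconjBy s x u) (hy : SemiconjBy s y v)
    (hxy : x * y + y * x = x + y + a - 1) (huv : u * v + v * u = u + v + a - 1) :
    Commute s a := by
  have hxy' : a = x * y + y * x - x - y + 1 := by rw [hxy]; abel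
  have huv' : a = u * v + v * u - u - v + 1 := by rw [huv]; abel
  have hs := ((((hx.mul_right hy).add_right (hy.mul_right hx)).sub_right hx).sub_right
    hy).add_right (SemiconjBy.one_right s)
  rwa [← hxy', ← huv'] at hs

theorem TwoSidedIdeal.sub_mem_iff_mk'_eq {R : Type*} [Ring R] (I : TwoSidedIdeal R) {a b : R} :
    a - b ∈ I ↔ I.ringCon.mk' a = I.ringCon.mk' b := by
  rw [← TwoSidedIdeal.rel_iff, RingCon.coe_mk', RingCon.eq]

namespace SwapAlgebra

variable {n : ℕ}

theorem sgen_comm (i j : Fin n) : sgen n i j = sgen n j i := by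
  rw [sgen, sgen, Sym2.eq_swap]

noncomputable abbrev swap (i j : Fin n) :
    (TwoSidedIdeal.span (swapRelationSet n)).ringCon.Quotient :=
  (TwoSidedIdeal.span (swapRelationSet n)).ringCon.mk' (sgen n i j)

theorem swap_comm (i j : Fin n) : swap i j = swap j i := by
  rw [swap, sgen_comm]

theorem mk'_eq_of_sub_mem_swapRelationSet {a b : FreeAlgebra ℂ (Sym2 (Fin n))}
    (h : a - b ∈ swapRelationSet n) :
    (TwoSidedIdeal.span (swapRelationSet n)).ringCon.mk' a =
      (TwoSidedIdeal.span (swapRelationSet n)).ringCon.mk' b :=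
  (TwoSidedIdeal.sub_mem_iff_mk'_eq _).mp (TwoSidedIdeal.subset_span h)

theorem semiconjBy_swap {i j k : Fin n} (hij : i ≠ j) (hjk : j ≠ k) (hik : i ≠ k) :
    SemiconjBy (swap i j) (swap j k) (swap i k) := by
  rw [SemiconjBy, ← map_mul, ← map_mul]
  exact mk'_eq_of_sub_mem_swapRelationSet ⟨i, j, k, hij, hjk, hik, .inr (.inl rfl)⟩

theorem swap_mul_add_mul {i j k : Fin n} (hij : i ≠ j) (hjk : j ≠ k) (hik : i ≠ k) :
    swap i j * swap j k + swap j k * swap i j = swap i j + swap j k + swap i k - 1 := by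
  rw [← map_mul, ← map_mul, ← map_add, ← map_add, ← map_add,
    ← map_one (TwoSidedIdeal.span (swapRelationSet n)).ringCon.mk', ← map_sub]
  exact mk'_eq_of_sub_mem_swapRelationSet ⟨i, j, k, hij, hjk, hik, .inr (.inr rfl)⟩

end SwapAlgebra

open SwapAlgebra

theorem commutator_mem_swapRelation_ideal_general (n : ℕ) (i j k l : Fin n)
    (hij : i ≠ j) (hik : i ≠ k) (hil : i ≠ l) (hjk : j ≠ k) (hjl : j ≠ l)
    (hkl : k ≠ l) :
    sgen n i j * sgen n k l - sgen n k l * sgen n i j ∈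
      TwoSidedIdeal.span (swapRelationSet n) := by
  have hx : SemiconjBy (swap k l) (swap i k) (swap i l) := by
    simpa only [swap_comm] using semiconjBy_swap hkl.symm hik.symm hil.symm
  have hy : SemiconjBy (swap k l) (swap j k) (swap j l) := by
    simpa only [swap_comm] using semiconjBy_swap hkl.symm hjk.symm hjl.symm
  have hxy : swap i k * swap j k + swap j k * swap i k = swap i k + swap j k + swap i j - 1 := by
    simpa only [swap_comm] using swap_mul_add_mul hik hjk.symm hij
  have huv : swap i l * swap j l + swap j l * swap i l = swap i l + swap j l + swap i j - 1 := by
    simpa only [swap_comm] using swap_mul_add_mul hil hjl.symm hij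
  rw [TwoSidedIdeal.sub_mem_iff_mk'_eq, map_mul, map_mul]
  exact (commute_of_semiconjBy_of_add_mul_eq hx hy hxy huv).symm.eq

/-- For four distinct indices `i, j, k, ℓ` (with `n ≥ 4`), the commutator
`[s_{ij}, s_{kℓ}] = s_{ij}s_{kℓ} − s_{kℓ}s_{ij}` lies in the two-sided ideal of the
free algebra generated by the relations `s_{pq}² = 1`, `s_{pq}s_{qr} = s_{pr}s_{pq}`
and `s_{pq}s_{qr} + s_{qr}s_{pq} = s_{pq} + s_{qr} + s_{pr} − 1`; that is, the
commutation relation `[S_{ij}, S_{kℓ}] = 0` is implied by those relations. -/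
theorem commutator_mem_swapRelation_ideal (n : ℕ) (hn : 4 ≤ n) (i j k l : Fin n)
    (hij : i ≠ j) (hik : i ≠ k) (hil : i ≠ l) (hjk : j ≠ k) (hjl : j ≠ l)
    (hkl : k ≠ l) :
    sgen n i j * sgen n k l - sgen n k l * sgen n i j ∈
      TwoSidedIdeal.span (swapRelationSet n) :=
  commutator_mem_swapRelation_ideal_general n i j k l hij hik hil hjk hjl hkl
end

section
/- For any even integer n, the element S_{12}S_{34}···S_{n-1,n} of the swap matrix algebra on n qubits cannot be written as a linear combination of products of fewer than n/2 swap matrices. -/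
/-!
The linear functional `Φ M = ∑_f M f (f + 1)` on matrices indexed by colourings
`f : Fin n → Fin 2` sends the matrix of `f ↦ f ∘ σ` to the number of colourings with
`f ∘ σ = f + 1`. Such a colouring cannot exist if `σ` has a fixed point, and a product of
fewer than `n / 2` transpositions moves fewer than `n` points; so `Φ` vanishes on the span.
For the disjoint product `(1 2)(3 4)⋯(n-1 n)` the parity colouring works, so `Φ` does not
vanish on it.
-/

/-- The qubit swap matrix `S_{ij}` on `(ℂ²)^{⊗ n}`, modeled as a matrix indexed by
functions `Fin n → Fin 2`: it permutes the tensor factors `i` and `j`. -/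
def swapMatrix (n : ℕ) (i j : Fin n) :
    Matrix (Fin n → Fin 2) (Fin n → Fin 2) ℂ :=
  fun f g => if g = f ∘ (Equiv.swap i j) then 1 else 0

open Equiv Finset

namespace Equiv.Perm

variable {ι : Type*} [DecidableEq ι] [Fintype ι]

theorem card_support_swap_le (x y : ι) : #(swap x y).support ≤ 2 := by
  by_cases h : x = y
  · simp [h]
  · rw [card_support_swap h]

theorem card_support_prod_swap_le (L : List (ι × ι)) :
    #(L.map fun p => swap p.1 p.2).prod.support ≤ 2 * L.length := by
  induction L with
  | nil => simp
  | cons p L ih =>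
    rw [List.map_cons, List.prod_cons, List.length_cons]
    calc _ ≤ #((swap p.1 p.2).support ∪ (L.map fun p => swap p.1 p.2).prod.support) :=
          card_le_card (support_mul_le _ _)
      _ ≤ 2 + 2 * L.length := (card_union_le _ _).trans (add_le_add (card_support_swap_le _ _) ih)
      _ = 2 * (L.length + 1) := by ring

theorem exists_prod_swap_apply_eq_self (L : List (ι × ι)) (hL : 2 * L.length < Fintype.card ι) :
    ∃ x, (L.map fun p => swap p.1 p.2).prod x = x := by
  obtain ⟨x, -, hx⟩ := exists_mem_notMem_of_card_lt_card
    ((card_support_prod_swap_le L).trans_lt (hL.trans_eq (card_univ (α := ι)).symm))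
  exact ⟨x, notMem_support.mp hx⟩

end Equiv.Perm

section PrecompMatrix

variable {ι α R : Type*} [DecidableEq ι] [Fintype ι] [Fintype α] [CommSemiring R]

variable (R) in
def twistedTrace (c : α → α) : Matrix (ι → α) (ι → α) R →ₗ[R] R :=
  ∑ f, Matrix.entryLinearMap R R f (c ∘ f)

theorem twistedTrace_apply (c : α → α) (M : Matrix (ι → α) (ι → α) R) :
    twistedTrace R c M = ∑ f, M f (c ∘ f) := by
  simp [twistedTrace]

variable [DecidableEq α]

variable (α R) in
def precompMatrix : Perm ι →* Matrix (ι → α) (ι → α) R where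
  toFun σ := .of fun f g => if g = f ∘ σ then 1 else 0
  map_one' := by
    ext f g
    simp [Matrix.one_apply, eq_comm]
  map_mul' σ τ := by
    ext f h
    rw [Matrix.mul_apply, sum_eq_single (f ∘ σ) (fun g _ hg => by simp [hg]) (by simp),
      Matrix.of_apply, Matrix.of_apply, if_pos rfl, one_mul]
    rfl

theorem precompMatrix_apply (σ : Perm ι) (f g : ι → α) :
    precompMatrix α R σ f g = if g = f ∘ σ then 1 else 0 :=
  rfl

theorem twistedTrace_precompMatrix (c : α → α) (σ : Perm ι) :
    twistedTrace R c (precompMatrix α R σ) = #{f : ι → α | c ∘ f = f ∘ σ} := by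
  simp only [twistedTrace_apply, precompMatrix_apply, sum_boole]

theorem twistedTrace_precompMatrix_eq_zero {c : α → α} (hc : ∀ a, c a ≠ a) {σ : Perm ι} {x : ι}
    (hx : σ x = x) : twistedTrace R c (precompMatrix α R σ) = 0 := by
  rw [twistedTrace_precompMatrix, card_eq_zero.mpr (filter_eq_empty_iff.mpr ?_), Nat.cast_zero]
  intro f _ hf
  exact hc (f x) (by simpa [hx] using congrFun hf x)

theorem twistedTrace_precompMatrix_ne_zero [CharZero R] {c : α → α} {σ : Perm ι} {f : ι → α}
    (hf : c ∘ f = f ∘ σ) : twistedTrace R c (precompMatrix α R σ) ≠ 0 := by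
  rw [twistedTrace_precompMatrix, Nat.cast_ne_zero, ← pos_iff_ne_zero, card_pos]
  exact ⟨f, by simpa using hf⟩

end PrecompMatrix

theorem prod_map_swapMatrix (n : ℕ) (L : List (Fin n × Fin n)) :
    (L.map fun p => swapMatrix n p.1 p.2).prod =
      precompMatrix (Fin 2) ℂ (L.map fun p => swap p.1 p.2).prod := by
  rw [map_list_prod, List.map_map]
  rfl

def pairSwap (m : ℕ) (i : Fin m) : Perm (Fin (2 * m)) :=
  swap ⟨2 * i.val, by omega⟩ ⟨2 * i.val + 1, by omega⟩

theorem mem_support_pairSwap {m : ℕ} {i : Fin m} {x : Fin (2 * m)} :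
    x ∈ (pairSwap m i).support ↔ x.val / 2 = i.val := by
  rw [pairSwap, Perm.support_swap (by simp [Fin.ext_iff])]
  simp only [mem_insert, mem_singleton, Fin.ext_iff]
  omega

theorem pairwise_disjoint_pairSwap (m : ℕ) :
    ((List.finRange m).map (pairSwap m)).Pairwise Perm.Disjoint := by
  refine List.Pairwise.map _ (fun i j hij => ?_) (List.nodup_finRange m)
  rw [Perm.disjoint_iff_disjoint_support, Finset.disjoint_left]
  intro x hi hj
  rw [mem_support_pairSwap] at hi hj
  exact hij (Fin.ext (hi.symm.trans hj))

def parity (n : ℕ) (x : Fin n) : Fin 2 := Fin.ofNat 2 x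

theorem parity_pairSwap_apply {m : ℕ} {i : Fin m} {x : Fin (2 * m)}
    (hx : x ∈ (pairSwap m i).support) : parity _ (pairSwap m i x) = parity _ x + 1 := by
  rw [mem_support_pairSwap] at hx
  simp only [pairSwap, swap_apply_def, Fin.ext_iff]
  split_ifs <;> simp [parity, Fin.val_add] <;> omega

theorem parity_comp_prod_pairSwap (m : ℕ) :
    (· + 1) ∘ parity (2 * m) = parity (2 * m) ∘ ((List.finRange m).map (pairSwap m)).prod := by
  funext x
  have hx : x ∈ (pairSwap m ⟨x.val / 2, by omega⟩).support := mem_support_pairSwap.mpr rfl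
  rw [Function.comp_apply, Function.comp_apply, ← Perm.eq_on_support_mem_disjoint
    (List.mem_map_of_mem (List.mem_finRange _)) (pairwise_disjoint_pairSwap m) x hx,
    parity_pairSwap_apply hx]

/-- For any even integer `n = 2m`, the product `S_{12} S_{34} ⋯ S_{n-1,n}` of the
`m` disjoint swap matrices cannot be written as a linear combination of products
of fewer than `n/2` swap matrices. -/
theorem disjoint_swap_product_not_in_span_of_shorter_products
    (n m : ℕ) (hn : n = 2 * m) :
    ((List.finRange m).map (fun i =>
        swapMatrix n ⟨2 * i.val, by have := i.isLt; omega⟩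
          ⟨2 * i.val + 1, by have := i.isLt; omega⟩)).prod ∉
      Submodule.span ℂ
        { M : Matrix (Fin n → Fin 2) (Fin n → Fin 2) ℂ |
          ∃ L : List (Fin n × Fin n), L.length < m ∧ (∀ p ∈ L, p.1 ≠ p.2) ∧
            M = (L.map (fun p => swapMatrix n p.1 p.2)).prod } := by
  subst hn
  have hflip : ∀ a : Fin 2, a + 1 ≠ a := by decide
  have htarget : ((List.finRange m).map (fun i =>
        swapMatrix (2 * m) ⟨2 * i.val, by omega⟩ ⟨2 * i.val + 1, by omega⟩)).prod =
      precompMatrix (Fin 2) ℂ ((List.finRange m).map (pairSwap m)).prod := by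
    rw [map_list_prod, List.map_map]
    rfl
  have hspan : Submodule.span ℂ {M | ∃ L : List (Fin (2 * m) × Fin (2 * m)), L.length < m ∧
      (∀ p ∈ L, p.1 ≠ p.2) ∧ M = (L.map fun p => swapMatrix (2 * m) p.1 p.2).prod} ≤
        LinearMap.ker (twistedTrace ℂ fun a : Fin 2 => a + 1) := by
    rw [Submodule.span_le]
    rintro _ ⟨L, hL, -, rfl⟩
    obtain ⟨x, hx⟩ := Perm.exists_prod_swap_apply_eq_self L (by rw [Fintype.card_fin]; omega)
    rw [SetLike.mem_coe, LinearMap.mem_ker, prod_map_swapMatrix]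
    exact twistedTrace_precompMatrix_eq_zero hflip hx
  rw [htarget]
  exact fun hmem => twistedTrace_precompMatrix_ne_zero (parity_comp_prod_pairSwap m) (hspan hmem)
end

section
/- For any n and 1 ≤ k < n/2, the irrep Hamiltonian of the n-vertex star graph in the two-row irrep [n-k,k] has exactly two eigenvalues: 2(n − k + 1) and 2k. If n is even and k = n/2, the irrep Hamiltonian equals (n+2) times the identity. -/
/-- The two-row Specht module `S^{[n-k,k]}` of `S_n`, realized inside the
permutation module on `k`-element subsets: `v` is supported on `k`-subsets and
has vanishing boundary. -/
def inTwoRowSpecht (n k : ℕ) (v : Finset (Fin n) → ℂ) : Prop :=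
  (∀ S : Finset (Fin n), S.card ≠ k → v S = 0) ∧
  (∀ T : Finset (Fin n), T.card = k - 1 → ∑ a ∈ Tᶜ, v (insert a T) = 0)

/-!
Write `D` (`downSum`) and `U` (`upSum`) for the down and up operators on functions of subsets,
so that the Specht module is the kernel of `D` on functions supported on `k`-sets. On such a `v`
the star Hamiltonian with centre `c` acts as `2(n - k + 1) v S` when `c ∈ S`, and as
`2((k + 1) v S - (U v)(S ∪ {c}))` when `c ∉ S`. Hence an eigenvector either is nonzero on a set
through `c`, with eigenvalue `2(n - k + 1)`, or vanishes on all of them, so that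
`(U v)(S ∪ {c}) = v S` and the eigenvalue is `2k`. For `2k < n` both occur: a polytabloid on `k`
pairs avoiding `c` has eigenvalue `2k`, and from a polytabloid `g` on `k - 1` such pairs,
`(n - 2k + 2)(c ∧ g) - U g` has eigenvalue `2(n - k + 1)`, where `(c ∧ g)(S) = g(S \ {c})` if
`c ∈ S` and `0` otherwise.

For `n = 2k` the relation `DU - UD = n - 2|S|` and the adjointness of `U` and `D` give
`‖U v‖² = ‖D v‖² = 0`, so `U v = 0` and the Hamiltonian is `n + 2` on every `S`.
-/

open Finset

namespace Finset

variable {α : Type*} [DecidableEq α] {s : Finset α} {i j : α}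

lemma image_swap_of_mem_of_notMem (hi : i ∈ s) (hj : j ∉ s) :
    s.image (Equiv.swap i j) = insert j (s.erase i) := by
  apply coe_injective
  rw [coe_image, Equiv.image_swap_of_mem_of_notMem hi hj, coe_insert, coe_erase,
    Set.insert_sdiff_singleton_comm (ne_of_mem_of_not_mem hi hj).symm]

lemma image_swap_of_mem_of_mem (hi : i ∈ s) (hj : j ∈ s) :
    s.image (Equiv.swap i j) = s := by
  refine (map_eq_image _ _).symm.trans (map_perm fun x hx => ?_)
  by_contra hxs
  exact hx (Equiv.swap_apply_of_ne_of_ne (ne_of_mem_of_not_mem hi hxs).symm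
    (ne_of_mem_of_not_mem hj hxs).symm)

lemma image_swap_of_notMem_of_notMem (hi : i ∉ s) (hj : j ∉ s) :
    s.image (Equiv.swap i j) = s := by
  conv_rhs => rw [← image_id (s := s)]
  exact image_congr fun x hx =>
    Equiv.swap_apply_of_ne_of_ne (ne_of_mem_of_not_mem hx hi) (ne_of_mem_of_not_mem hx hj)

end Finset

section UpDownOperators

variable {α R : Type*} [DecidableEq α] [CommRing R]

def upSum (v : Finset α → R) (S : Finset α) : R := ∑ x ∈ S, v (S.erase x)

lemma upSum_insert (v : Finset α → R) {a : α} {S : Finset α} (ha : a ∉ S) :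
    upSum v (insert a S) = v S + ∑ x ∈ S, v (insert a (S.erase x)) := by
  rw [upSum, sum_insert ha, erase_insert ha]
  congr 1
  refine sum_congr rfl fun x hx => ?_
  rw [erase_insert_of_ne (ne_of_mem_of_not_mem hx ha).symm]

variable [Fintype α]

def downSum (v : Finset α → R) (T : Finset α) : R := ∑ a ∈ Tᶜ, v (insert a T)

lemma downSum_erase (v : Finset α → R) {x : α} {S : Finset α} (hx : x ∈ S) :
    downSum v (S.erase x) = v S + ∑ b ∈ Sᶜ, v (insert b (S.erase x)) := by
  rw [downSum, compl_erase, sum_insert (by simp [hx]), insert_erase hx]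

lemma downSum_upSum_sub_upSum_downSum (v : Finset α → R) (S : Finset α) :
    downSum (upSum v) S - upSum (downSum v) S = ((Fintype.card α : R) - 2 * S.card) * v S := by
  have hdown : downSum (upSum v) S =
      ∑ a ∈ Sᶜ, (v S + ∑ x ∈ S, v (insert a (S.erase x))) :=
    sum_congr rfl fun a ha => upSum_insert v (mem_compl.1 ha)
  have hup : upSum (downSum v) S = ∑ x ∈ S, (v S + ∑ a ∈ Sᶜ, v (insert a (S.erase x))) :=
    sum_congr rfl fun x hx => downSum_erase v hx
  rw [hdown, hup, sum_add_distrib, sum_add_distrib, sum_comm (s := Sᶜ), sum_const, sum_const,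
    card_compl, nsmul_eq_mul, nsmul_eq_mul, Nat.cast_sub (card_le_univ S)]
  ring

lemma sum_upSum_mul (v w : Finset α → R) :
    ∑ S, upSum v S * w S = ∑ T, v T * downSum w T := by
  simp only [upSum, downSum, sum_mul, mul_sum]
  rw [sum_sigma', sum_sigma']
  refine sum_nbij' (fun p => ⟨p.1.erase p.2, p.2⟩) (fun p => ⟨insert p.2 p.1, p.2⟩)
    ?_ ?_ ?_ ?_ ?_ <;> simp +contextual [insert_erase]

lemma upSum_eq_zero_of_card_eq_two_mul {𝕜 : Type*} [RCLike 𝕜] {k : ℕ}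
    (hcard : Fintype.card α = 2 * k) {v : Finset α → 𝕜} (hsupp : ∀ S, S.card ≠ k → v S = 0)
    (hdown : ∀ T, T.card = k - 1 → downSum v T = 0) : upSum v = 0 := by
  have hterm : ∀ S : Finset α, starRingEnd 𝕜 (v S) * downSum (upSum v) S = 0 := by
    intro S
    rw [← sub_add_cancel (downSum (upSum v) S) (upSum (downSum v) S),
      downSum_upSum_sub_upSum_downSum]
    by_cases hS : S.card = k
    · have hup : upSum (downSum v) S = 0 := sum_eq_zero fun x hx =>
        hdown _ (by rw [card_erase_of_mem hx, hS])
      rw [hup, hcard, hS]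
      push_cast
      ring
    · rw [hsupp S hS, map_zero, zero_mul]
  have hnorm : ∑ U, ((‖upSum v U‖ ^ 2 : ℝ) : 𝕜) = 0 := by
    calc ∑ U, ((‖upSum v U‖ ^ 2 : ℝ) : 𝕜)
        = ∑ U, upSum (fun S => starRingEnd 𝕜 (v S)) U * upSum v U := by
          refine sum_congr rfl fun U _ => ?_
          simp only [upSum]
          rw [← map_sum, RCLike.conj_mul]
          norm_cast
      _ = 0 := by rw [sum_upSum_mul]; exact sum_eq_zero fun S _ => hterm S
  have hnorm' : ∑ U, ‖upSum v U‖ ^ 2 = 0 := by exact_mod_cast hnorm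
  ext U
  simpa using (sum_eq_zero_iff_of_nonneg (fun _ _ => by positivity)).1 hnorm' U (mem_univ U)

end UpDownOperators

section StarHamiltonian

variable {α R : Type*} [Fintype α] [DecidableEq α] [CommRing R]

def starHam (c : α) (v : Finset α → R) (S : Finset α) : R :=
  ∑ i ∈ univ.erase c, 2 * (v S - v (S.image (Equiv.swap i c)))

lemma starHam_of_mem (c : α) (v : Finset α → R) {S : Finset α} (hc : c ∈ S) :
    starHam c v S =
      2 * (((Fintype.card α : R) - S.card + 1) * v S - downSum v (S.erase c)) := by
  have hsplit : univ.erase c = S.erase c ∪ Sᶜ := by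
    ext x; by_cases hx : x = c <;> simp [hx, hc, em]
  have hdisj : Disjoint (S.erase c) Sᶜ :=
    disjoint_left.2 fun x hx => by simpa using mem_of_mem_erase hx
  rw [starHam, hsplit, sum_union hdisj,
    sum_eq_zero fun i hi => by
      rw [image_swap_of_mem_of_mem (mem_of_mem_erase hi) hc, sub_self, mul_zero],
    sum_congr rfl fun i hi => by
      rw [Equiv.swap_comm, image_swap_of_mem_of_notMem hc (mem_compl.1 hi)],
    downSum_erase v hc, ← mul_sum, sum_sub_distrib, sum_const, card_compl, nsmul_eq_mul,
    Nat.cast_sub (card_le_univ S)]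
  ring

lemma starHam_of_notMem (c : α) (v : Finset α → R) {S : Finset α} (hc : c ∉ S) :
    starHam c v S = 2 * (((S.card : R) + 1) * v S - upSum v (insert c S)) := by
  have hsub : S ⊆ univ.erase c := fun x hx =>
    mem_erase.2 ⟨ne_of_mem_of_not_mem hx hc, mem_univ x⟩
  rw [starHam, ← sum_subset hsub fun i _ hi => by
      rw [image_swap_of_notMem_of_notMem hi hc, sub_self, mul_zero],
    sum_congr rfl fun i hi => by rw [image_swap_of_mem_of_notMem hi hc],
    upSum_insert v hc, ← mul_sum, sum_sub_distrib, sum_const, nsmul_eq_mul]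
  ring

end StarHamiltonian

section Polytabloid

variable {α ι R : Type*} [DecidableEq α] [CommRing R] (e : ι ⊕ ι ↪ α)

def pairDiff (j : ι) (S : Finset α) : R :=
  (if e (.inl j) ∈ S then 1 else 0) - if e (.inr j) ∈ S then 1 else 0

lemma pairDiff_insert_of_ne {j : ι} {a : α} (S : Finset α) (hl : a ≠ e (.inl j))
    (hr : a ≠ e (.inr j)) : pairDiff e j (insert a S) = (pairDiff e j S : R) := by
  simp [pairDiff, mem_insert, hl.symm, hr.symm]

variable [Fintype ι]

def polytabloid (S : Finset α) : R :=
  if S.card = Fintype.card ι then ∏ j, pairDiff e j S else 0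

lemma polytabloid_eq_zero_of_pairDiff_eq_zero {j : ι} {S : Finset α}
    (h : pairDiff e j S = (0 : R)) : polytabloid e S = (0 : R) := by
  unfold polytabloid
  split_ifs
  exacts [prod_eq_zero (mem_univ j) h, rfl]

lemma card_le_of_forall_mem_or_mem {S : Finset α}
    (h : ∀ j, e (.inl j) ∈ S ∨ e (.inr j) ∈ S) : Fintype.card ι ≤ S.card := by
  let f : ι → α := fun j => if e (.inl j) ∈ S then e (.inl j) else e (.inr j)
  have hf : Function.Injective f := by
    intro i j hij
    simp only [f] at hij
    split_ifs at hij <;> simpa using e.injective hij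
  have hmaps : ∀ j ∈ (univ : Finset ι), f j ∈ S := by
    intro j _
    simp only [f]
    split_ifs with hl
    exacts [hl, (h j).resolve_left hl]
  simpa using card_le_card_of_injOn f hmaps hf.injOn

lemma forall_mem_or_mem_of_polytabloid_ne_zero {S : Finset α} (h : polytabloid e S ≠ (0 : R)) :
    ∀ j, e (.inl j) ∈ S ∨ e (.inr j) ∈ S := by
  by_contra! hj
  obtain ⟨j, hl, hr⟩ := hj
  exact h (polytabloid_eq_zero_of_pairDiff_eq_zero e (j := j) (by simp [pairDiff, hl, hr]))

lemma polytabloid_eq_zero_of_mem {c : α} (hc : c ∉ Set.range e) {S : Finset α} (hcS : c ∈ S) :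
    polytabloid e S = (0 : R) := by
  by_contra h
  have hcard : S.card = Fintype.card ι := by by_contra hne; exact h (if_neg hne)
  have hle : Fintype.card ι ≤ (S.erase c).card :=
    card_le_of_forall_mem_or_mem e fun j =>
      (forall_mem_or_mem_of_polytabloid_ne_zero e h j).imp
        (fun hS => mem_erase.2 ⟨fun h' => hc ⟨_, h'⟩, hS⟩)
        (fun hS => mem_erase.2 ⟨fun h' => hc ⟨_, h'⟩, hS⟩)
  rw [card_erase_of_mem hcS] at hle
  have := card_pos.2 ⟨c, hcS⟩
  omega

lemma polytabloid_ne_zero [Nontrivial R] : (polytabloid e : Finset α → R) ≠ 0 := by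
  refine Function.ne_iff.2 ⟨univ.map (Function.Embedding.inl.trans e), ?_⟩
  rw [polytabloid, if_pos (by simp), prod_eq_one fun j _ => by simp [pairDiff]]
  exact one_ne_zero

lemma downSum_polytabloid [Fintype α] (T : Finset α) : downSum (polytabloid e) T = (0 : R) := by
  classical
  by_cases hT : T.card + 1 = Fintype.card ι
  · obtain ⟨j₀, hl, hr⟩ : ∃ j, e (.inl j) ∉ T ∧ e (.inr j) ∉ T := by
      by_contra! h
      have := card_le_of_forall_mem_or_mem e fun j => or_iff_not_imp_left.2 (h j)
      omega
    -- only the two ends of a pair missed by `T` contribute, with opposite signs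
    have hpair : ∀ a ∉ T, (∀ j ≠ j₀, a ≠ e (.inl j) ∧ a ≠ e (.inr j)) →
        polytabloid e (insert a T) =
          (pairDiff e j₀ (insert a T) : R) * ∏ j ∈ univ.erase j₀, pairDiff e j T := by
      intro a ha hne
      rw [polytabloid, if_pos (by rw [card_insert_of_notMem ha, hT]),
        ← mul_prod_erase _ _ (mem_univ j₀)]
      exact congrArg _ (prod_congr rfl fun j hj =>
        pairDiff_insert_of_ne e T (hne j (ne_of_mem_erase hj)).1 (hne j (ne_of_mem_erase hj)).2)
    rw [downSum, sum_eq_add_of_mem (e (.inl j₀)) (e (.inr j₀)) (mem_compl.2 hl) (mem_compl.2 hr)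
      (by simp) fun a _ ha => polytabloid_eq_zero_of_pairDiff_eq_zero e (R := R) (j := j₀)
        (by simp [pairDiff, mem_insert, hl, hr, Ne.symm ha.1, Ne.symm ha.2]),
      hpair _ hl fun j hj => by simp [hj.symm], hpair _ hr fun j hj => by simp [hj.symm]]
    simp [pairDiff, hl, hr]
  · exact sum_eq_zero fun a ha =>
      if_neg (by rw [card_insert_of_notMem (mem_compl.1 ha)]; exact hT)

lemma exists_embedding_sum_notMem_range [Fintype α] {r : ℕ} (h : 2 * r < Fintype.card α)
    (c : α) : ∃ e : Fin r ⊕ Fin r ↪ α, c ∉ Set.range e := by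
  obtain ⟨f⟩ := Function.Embedding.nonempty_of_card_le (α := Fin r ⊕ Fin r) (β := {x // x ≠ c})
    (by simp; omega)
  exact ⟨f.trans (Function.Embedding.subtype _), fun ⟨y, hy⟩ => (f y).2 hy⟩

end Polytabloid

section Raising

variable {α R : Type*} [CommRing R] {r : ℕ} {g : Finset α → R}

lemma natCast_card_mul_of_support (hsupp : ∀ S, S.card ≠ r → g S = 0) (S : Finset α) :
    (S.card : R) * g S = r * g S := by
  by_cases hS : S.card = r
  · rw [hS]
  · rw [hsupp S hS, mul_zero, mul_zero]

variable [Fintype α] [DecidableEq α] {c : α}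

def extendBy (c : α) (g : Finset α → R) (S : Finset α) : R :=
  if c ∈ S then g (S.erase c) else 0

lemma downSum_extendBy (hc : ∀ S, c ∈ S → g S = 0) (hdown : ∀ T, downSum g T = 0)
    (T : Finset α) : downSum (extendBy c g) T = g T := by
  by_cases hcT : c ∈ T
  · have hsum := downSum_erase g hcT
    rw [hdown, hc T hcT, zero_add] at hsum
    rw [hc T hcT, downSum, hsum]
    refine sum_congr rfl fun a ha => ?_
    rw [extendBy, if_pos (mem_insert_of_mem hcT),
      erase_insert_of_ne (ne_of_mem_of_not_mem hcT (mem_compl.1 ha)).symm]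
  · have hnot : ∀ a ∈ Tᶜ, a ≠ c → extendBy c g (insert a T) = 0 := fun a _ hac =>
      if_neg (by rw [mem_insert, not_or]; exact ⟨Ne.symm hac, hcT⟩)
    rw [downSum, sum_eq_single_of_mem c (mem_compl.2 hcT) hnot, extendBy,
      if_pos (mem_insert_self c T), erase_insert hcT]

/-- The coefficient `card α - 2 r` is the one for which the commutation relation
`downSum_upSum_sub_upSum_downSum` makes `downSum (raiseAt c r g)` vanish. -/
def raiseAt (c : α) (r : ℕ) (g : Finset α → R) (S : Finset α) : R :=
  ((Fintype.card α : R) - 2 * r) * extendBy c g S - upSum g S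

lemma raiseAt_eq_zero_of_card_ne (hsupp : ∀ S, S.card ≠ r → g S = 0) {S : Finset α}
    (hS : S.card ≠ r + 1) : raiseAt c r g S = 0 := by
  have herase : ∀ x ∈ S, g (S.erase x) = 0 := fun x hx =>
    hsupp _ (by rw [card_erase_of_mem hx]; have := card_pos.2 ⟨x, hx⟩; omega)
  have hext : extendBy c g S = 0 := by
    unfold extendBy
    split_ifs with hcS
    exacts [herase c hcS, rfl]
  rw [raiseAt, hext, upSum, sum_eq_zero herase, mul_zero, sub_zero]

lemma downSum_raiseAt (hsupp : ∀ S, S.card ≠ r → g S = 0) (hc : ∀ S, c ∈ S → g S = 0)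
    (hdown : ∀ T, downSum g T = 0) (T : Finset α) : downSum (raiseAt c r g) T = 0 := by
  have hcomm := downSum_upSum_sub_upSum_downSum g T
  rw [upSum, sum_eq_zero fun x _ => hdown _, sub_zero] at hcomm
  have hlin : downSum (raiseAt c r g) T =
      ((Fintype.card α : R) - 2 * r) * downSum (extendBy c g) T - downSum (upSum g) T := by
    simp only [downSum, raiseAt, sum_sub_distrib, mul_sum]
  rw [hlin, downSum_extendBy hc hdown, hcomm]
  linear_combination 2 * natCast_card_mul_of_support hsupp T

lemma raiseAt_of_notMem {S : Finset α} (hS : c ∉ S) : raiseAt c r g S = -upSum g S := by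
  rw [raiseAt, extendBy, if_neg hS]
  ring

lemma raiseAt_insert (hc : ∀ S, c ∈ S → g S = 0) {S : Finset α} (hS : c ∉ S) :
    raiseAt c r g (insert c S) = ((Fintype.card α : R) - 2 * r - 1) * g S := by
  rw [raiseAt, extendBy, if_pos (mem_insert_self c S), erase_insert hS, upSum_insert g hS,
    sum_eq_zero fun x _ => hc _ (mem_insert_self c _)]
  ring

lemma upSum_raiseAt_insert (hc : ∀ S, c ∈ S → g S = 0) {S : Finset α} (hS : c ∉ S) :
    upSum (raiseAt c r g) (insert c S) =
      (2 * r + 2 - (Fintype.card α : R)) * raiseAt c r g S := by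
  rw [upSum_insert _ hS,
    sum_congr rfl fun x _ => raiseAt_insert hc fun h => hS (mem_of_mem_erase h),
    ← mul_sum, raiseAt_of_notMem hS]
  simp only [upSum]
  ring

end Raising

namespace inTwoRowSpecht

variable {n k : ℕ} {v : Finset (Fin n) → ℂ}

lemma downSum_eq_zero (hv : inTwoRowSpecht n k v) (T : Finset (Fin n)) : downSum v T = 0 := by
  by_cases hT : T.card = k - 1
  · exact hv.2 T hT
  · exact sum_eq_zero fun a ha => hv.1 _ (by rw [card_insert_of_notMem (mem_compl.1 ha)]; omega)

lemma starHam_of_mem (hv : inTwoRowSpecht n k v) {c : Fin n} {S : Finset (Fin n)} (hc : c ∈ S) :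
    starHam c v S = 2 * ((n : ℂ) - k + 1) * v S := by
  rw [_root_.starHam_of_mem c v hc, hv.downSum_eq_zero, Fintype.card_fin]
  linear_combination (-2) * natCast_card_mul_of_support hv.1 S

lemma starHam_of_notMem (hv : inTwoRowSpecht n k v) {c : Fin n} {S : Finset (Fin n)}
    (hc : c ∉ S) : starHam c v S = 2 * (((k : ℂ) + 1) * v S - upSum v (insert c S)) := by
  rw [_root_.starHam_of_notMem c v hc]
  linear_combination 2 * natCast_card_mul_of_support hv.1 S

lemma starHam_of_forall_mem_eq_zero (hv : inTwoRowSpecht n k v) {c : Fin n}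
    (hc : ∀ S, c ∈ S → v S = 0) (S : Finset (Fin n)) : starHam c v S = 2 * k * v S := by
  by_cases hcS : c ∈ S
  · rw [hv.starHam_of_mem hcS, hc S hcS, mul_zero, mul_zero]
  · rw [hv.starHam_of_notMem hcS, upSum_insert v hcS,
      sum_eq_zero fun x _ => hc _ (mem_insert_self c _)]
    ring

lemma starHam_of_upSum_insert (hv : inTwoRowSpecht n k v) {c : Fin n}
    (hup : ∀ S, c ∉ S → upSum v (insert c S) = (2 * k - n) * v S) (S : Finset (Fin n)) :
    starHam c v S = 2 * ((n : ℂ) - k + 1) * v S := by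
  by_cases hcS : c ∈ S
  · exact hv.starHam_of_mem hcS
  · rw [hv.starHam_of_notMem hcS, hup S hcS]
    ring

lemma eq_or_eq_of_starHam_eq_smul (hv : inTwoRowSpecht n k v) (hv0 : v ≠ 0) {c : Fin n} {μ : ℂ}
    (hμ : ∀ S, starHam c v S = μ * v S) : μ = 2 * ((n : ℂ) - k + 1) ∨ μ = 2 * k := by
  by_cases hc : ∃ S, c ∈ S ∧ v S ≠ 0
  · obtain ⟨S, hcS, hS⟩ := hc
    left
    exact mul_right_cancel₀ hS ((hμ S).symm.trans (hv.starHam_of_mem hcS))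
  · push Not at hc
    obtain ⟨S, hS⟩ := Function.ne_iff.1 hv0
    right
    exact mul_right_cancel₀ hS ((hμ S).symm.trans (hv.starHam_of_forall_mem_eq_zero hc S))

lemma starHam_of_two_mul_eq (hv : inTwoRowSpecht n k v) (hn : 2 * k = n) (c : Fin n)
    (S : Finset (Fin n)) : starHam c v S = ((n : ℂ) + 2) * v S := by
  have hcast : (n : ℂ) = 2 * k := by exact_mod_cast hn.symm
  by_cases hcS : c ∈ S
  · rw [hv.starHam_of_mem hcS, hcast]
    ring
  · rw [hv.starHam_of_notMem hcS,
      upSum_eq_zero_of_card_eq_two_mul (by rw [Fintype.card_fin, hn]) hv.1 hv.2, hcast]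
    simp only [Pi.zero_apply]
    ring

end inTwoRowSpecht

lemma exists_inTwoRowSpecht_forall_mem_eq_zero {n k : ℕ} (c : Fin n) (h : 2 * k < n) :
    ∃ v, inTwoRowSpecht n k v ∧ v ≠ 0 ∧ ∀ S, c ∈ S → v S = 0 := by
  obtain ⟨e, he⟩ := exists_embedding_sum_notMem_range (r := k) (by rwa [Fintype.card_fin]) c
  exact ⟨polytabloid e, ⟨fun S hS => if_neg (by rwa [Fintype.card_fin]),
    fun T _ => downSum_polytabloid e T⟩, polytabloid_ne_zero e,
    fun S hS => polytabloid_eq_zero_of_mem e he hS⟩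

lemma exists_inTwoRowSpecht_upSum_insert_eq {n k : ℕ} (c : Fin n) (hk : 1 ≤ k) (h : 2 * k < n) :
    ∃ v, inTwoRowSpecht n k v ∧ v ≠ 0 ∧
      ∀ S, c ∉ S → upSum v (insert c S) = (2 * k - n) * v S := by
  obtain ⟨g, hg, hg0, hgc⟩ := exists_inTwoRowSpecht_forall_mem_eq_zero (k := k - 1) c (by omega)
  have hk' : ((k - 1 : ℕ) : ℂ) = k - 1 := by rw [Nat.cast_sub hk, Nat.cast_one]
  refine ⟨raiseAt c (k - 1) g, ⟨fun S hS => raiseAt_eq_zero_of_card_ne hg.1 (by omega),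
    fun T _ => downSum_raiseAt hg.1 hgc hg.downSum_eq_zero T⟩, ?_, fun S hS => ?_⟩
  · obtain ⟨T, hT⟩ := Function.ne_iff.1 hg0
    have hcT : c ∉ T := fun h' => hT (hgc T h')
    have hcoef : (n : ℂ) - 2 * ((k - 1 : ℕ) : ℂ) - 1 ≠ 0 := by
      rw [show (n : ℂ) - 2 * ((k - 1 : ℕ) : ℂ) - 1 = ((n - 2 * k + 1 : ℕ) : ℂ) by
        push_cast [Nat.cast_sub h.le, hk']; ring]
      exact Nat.cast_ne_zero.2 (by omega)
    intro h0
    have := congrFun h0 (insert c T)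
    rw [raiseAt_insert hgc hcT, Fintype.card_fin, Pi.zero_apply] at this
    exact mul_ne_zero hcoef hT this
  · rw [upSum_raiseAt_insert hgc hS, Fintype.card_fin, hk']
    ring

/-- For the `n`-vertex star graph (edges `(i, n)` for `i < n`, with center the
last vertex), the irrep Hamiltonian `ρ_{[n-k,k]} (Σ_{i<n} 2(e − (i n)))` in the
two-row irrep `[n-k,k]` (realized on the Specht model, with
`(ρ(π) v)(S) = v(π⁻¹ S)`):
for `1 ≤ k < n/2` it has exactly two (distinct) eigenvalues, `2(n − k + 1)` and
`2k`; and if `n` is even and `k = n/2`, it equals `(n+2)` times the identity. -/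
theorem star_irrep_hamiltonian_eigenvalues (n k : ℕ) (hk1 : 1 ≤ k)
    (hk2 : 2 * k ≤ n) :
    (2 * k < n →
      ({μ : ℂ | ∃ v : Finset (Fin n) → ℂ, inTwoRowSpecht n k v ∧ v ≠ 0 ∧
          ∀ S : Finset (Fin n),
            (∑ i ∈ (Finset.univ : Finset (Fin n)).erase ⟨n - 1, by omega⟩,
              (2 : ℂ) * (v S - v (S.image (Equiv.swap i ⟨n - 1, by omega⟩))))
              = μ * v S}
          = {2 * ((n : ℂ) - (k : ℂ) + 1), 2 * (k : ℂ)} ∧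
        2 * ((n : ℂ) - (k : ℂ) + 1) ≠ 2 * (k : ℂ))) ∧
    (2 * k = n →
      ∀ v : Finset (Fin n) → ℂ, inTwoRowSpecht n k v →
        ∀ S : Finset (Fin n),
          (∑ i ∈ (Finset.univ : Finset (Fin n)).erase ⟨n - 1, by omega⟩,
            (2 : ℂ) * (v S - v (S.image (Equiv.swap i ⟨n - 1, by omega⟩))))
            = ((n : ℂ) + 2) * v S) := by
  let c : Fin n := ⟨n - 1, by omega⟩
  refine ⟨fun hlt => ⟨?_, ?_⟩, fun hn v hv S => hv.starHam_of_two_mul_eq hn c S⟩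
  · ext μ
    refine ⟨fun ⟨v, hv, hv0, hμ⟩ => hv.eq_or_eq_of_starHam_eq_smul hv0 (c := c) hμ, ?_⟩
    rintro (rfl | rfl)
    · obtain ⟨v, hv, hv0, hup⟩ := exists_inTwoRowSpecht_upSum_insert_eq c hk1 hlt
      exact ⟨v, hv, hv0, hv.starHam_of_upSum_insert hup⟩
    · obtain ⟨v, hv, hv0, hc⟩ := exists_inTwoRowSpecht_forall_mem_eq_zero c hlt
      exact ⟨v, hv, hv0, hv.starHam_of_forall_mem_eq_zero hc⟩
  · intro h
    have : ((n + 1 : ℕ) : ℂ) = ((2 * k : ℕ) : ℂ) := by push_cast; linear_combination h / 2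
    have := Nat.cast_injective this
    omega
end
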